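/- Let m ≥ 1, M = 2m, N ≤ m, and let V = Finset (Fin M) → ℂ carry the inner product making the basis (e_S) orthonormal, with Jordan–Wigner operators c_k, d_k. Let ω : Fin m → ℝ and J = (1/2) ∑_{k<m} ω_k (c_k ∘ d_{m+k} + c_{m+k} ∘ d_k). Let ψ = e_S with S = {k : Fin M | (k : ℕ) < N} (the Fock state with the first N modes occupied). Then 4·(⟪ψ, J(Jψ)⟫ − ⟪ψ, Jψ⟫²) = ∑_{k<N} ω_k². -/
import Mathlib


open scoped BigOperators

/-- The fermionic Fock space over `M` modes. -/
abbrev FockSpace (M : ℕ) : Type := Finset (Fin M) → ℂ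

/-- The inner product on the Fock space making the basis `(e_S)` orthonormal. -/
noncomputable def fockInner {M : ℕ} (f g : FockSpace M) : ℂ :=
  ∑ S, starRingEnd ℂ (f S) * g S

/-- The Jordan–Wigner creation operator `c_k`. -/
noncomputable def crea {M : ℕ} (k : Fin M) : FockSpace M →ₗ[ℂ] FockSpace M :=
  (Pi.basisFun ℂ (Finset (Fin M))).constr ℂ fun S =>
    if k ∈ S then 0
    else ((-1 : ℂ) ^ (S.filter fun j => j < k).card) • (Pi.single (insert k S) (1 : ℂ) : FockSpace M)

/-- The Jordan–Wigner annihilation operator `d_k`. -/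
noncomputable def annih {M : ℕ} (k : Fin M) : FockSpace M →ₗ[ℂ] FockSpace M :=
  (Pi.basisFun ℂ (Finset (Fin M))).constr ℂ fun S =>
    if k ∈ S then ((-1 : ℂ) ^ (S.filter fun j => j < k).card) • (Pi.single (S.erase k) (1 : ℂ) : FockSpace M)
    else 0

/-- The element of `Fin (2*m)` with value `k`, for `k : Fin m`. -/
def low {m : ℕ} (k : Fin m) : Fin (2 * m) := ⟨k.1, by have := k.isLt; omega⟩

/-- The element of `Fin (2*m)` with value `m + k`, for `k : Fin m`. -/
def high {m : ℕ} (k : Fin m) : Fin (2 * m) := ⟨m + k.1, by have := k.isLt; omega⟩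

/-- The multimode beam-splitter generator
`J = (1/2) ∑_k ω_k (c_k ∘ d_{m+k} + c_{m+k} ∘ d_k)`. -/
noncomputable def Jgen (m : ℕ) (ω : Fin m → ℝ) :
    FockSpace (2 * m) →ₗ[ℂ] FockSpace (2 * m) :=
  (1 / 2 : ℂ) • ∑ k : Fin m, ((ω k : ℝ) : ℂ) •
    (crea (low k) ∘ₗ annih (high k) + crea (high k) ∘ₗ annih (low k))

/-- The Fock basis state with the first `N` modes occupied. -/
noncomputable def fockN (M N : ℕ) : FockSpace M :=
  Pi.single (Finset.univ.filter fun k : Fin M => (k : ℕ) < N) (1 : ℂ)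

-- auxiliaries
lemma single_eq_basis {M : ℕ} (T : Finset (Fin M)) :
    (Pi.single T 1 : FockSpace M) = Pi.basisFun ℂ (Finset (Fin M)) T := by
  ext x; simp [Pi.basisFun_apply, Pi.single_apply, Function.update]

lemma annih_single {M : ℕ} (k : Fin M) (T : Finset (Fin M)) :
    annih k (Pi.single T 1) =
      if k ∈ T then ((-1:ℂ)^((T.filter fun j => j < k).card)) • (Pi.single (T.erase k) (1:ℂ) : FockSpace M) else 0 := by
  rw [single_eq_basis, annih, Module.Basis.constr_basis]

lemma crea_single {M : ℕ} (k : Fin M) (T : Finset (Fin M)) :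
    crea k (Pi.single T 1) =
      if k ∈ T then 0 else ((-1:ℂ)^((T.filter fun j => j < k).card)) • (Pi.single (insert k T) (1:ℂ) : FockSpace M) := by
  rw [single_eq_basis, crea, Module.Basis.constr_basis]

lemma fockInner_single {M : ℕ} (T : Finset (Fin M)) (g : FockSpace M) :
    fockInner (Pi.single T (1:ℂ)) g = g T := by
  unfold fockInner
  rw [Finset.sum_eq_single T (fun b _ hb => by simp [Pi.single_apply, hb]) (by simp)]
  simp

def Sset (m N : ℕ) : Finset (Fin (2*m)) := Finset.univ.filter fun k : Fin (2*m) => (k:ℕ) < N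
def Eset (m N : ℕ) (k : Fin m) : Finset (Fin (2*m)) := (Sset m N).erase (low k)
def Tset (m N : ℕ) (k : Fin m) : Finset (Fin (2*m)) := insert (high k) (Eset m N k)
noncomputable def sa (m N : ℕ) (k : Fin m) : ℂ := (-1)^(((Sset m N).filter fun j => j < low k).card)
noncomputable def sb (m N : ℕ) (k : Fin m) : ℂ := (-1)^(((Eset m N k).filter fun j => j < high k).card)

lemma mem_S_low {m N : ℕ} (k : Fin m) : low k ∈ Sset m N ↔ (k:ℕ) < N := by
  simp [Sset, low]

lemma notMem_S_high {m N : ℕ} (hN : N ≤ m) (k : Fin m) : high k ∉ Sset m N := by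
  simp [Sset, high]; omega

lemma notMem_E_high {m N : ℕ} (hN : N ≤ m) (k j : Fin m) : high j ∉ Eset m N k :=
  fun h => notMem_S_high hN j (Finset.mem_of_mem_erase h)

lemma low_ne_high {m : ℕ} (j k : Fin m) : low j ≠ high k := by
  intro h
  have := congrArg Fin.val h
  simp [low, high] at this
  have := j.isLt; omega

lemma high_eq_high {m : ℕ} (j k : Fin m) : high j = high k ↔ j = k := by
  constructor
  · intro h; have := congrArg Fin.val h; simp [high] at this; exact Fin.ext this
  · rintro rfl; rfl

lemma mem_T_high {m N : ℕ} (hN : N ≤ m) (j k : Fin m) : high j ∈ Tset m N k ↔ j = k := by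
  simp only [Tset, Finset.mem_insert, high_eq_high]
  exact ⟨fun h => h.elim id (fun h => absurd h (notMem_E_high hN k j)), fun h => Or.inl h⟩

-- stage 1
lemma stage1 {m N : ℕ} (hN : N ≤ m) (k : Fin m) :
    crea (low k) (annih (high k) (Pi.single (Sset m N) 1)) +
    crea (high k) (annih (low k) (Pi.single (Sset m N) 1)) =
    if (k:ℕ) < N then (sa m N k * sb m N k) • (Pi.single (Tset m N k) (1:ℂ) : FockSpace (2*m)) else 0 := by
  rw [annih_single, annih_single, if_neg (notMem_S_high hN k), map_zero, zero_add]
  by_cases hk : (k:ℕ) < N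
  · rw [if_pos ((mem_S_low k).mpr hk), if_pos hk, map_smul, crea_single,
      if_neg (show high k ∉ (Sset m N).erase (low k) from notMem_E_high hN k k)]
    rw [smul_smul]
    rfl
  · rw [if_neg (fun h => hk ((mem_S_low k).mp h)), if_neg hk, map_zero]

lemma S_ne_T {m N : ℕ} (hN : N ≤ m) (k : Fin m) : Sset m N ≠ Tset m N k :=
  fun h => notMem_S_high hN k (h ▸ Finset.mem_insert_self _ _)

lemma crea_high_eval {m N : ℕ} (hN : N ≤ m) (j : Fin m) (T : Finset (Fin (2*m))) :
    (crea (high j) (Pi.single T (1:ℂ))) (Sset m N) = 0 := by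
  rw [crea_single]
  split
  · rfl
  · have hne : Sset m N ≠ insert (high j) T :=
      fun h => notMem_S_high hN j (h ▸ Finset.mem_insert_self _ _)
    simp [Pi.single_apply, hne]

lemma stage2b {m N : ℕ} (hN : N ≤ m) (j k : Fin m) :
    (crea (high j) (annih (low j) (Pi.single (Tset m N k) (1:ℂ)))) (Sset m N) = 0 := by
  rw [annih_single]
  split
  · rw [map_smul]
    simp [crea_high_eval hN j]
  · simp

lemma stage2a {m N : ℕ} (hN : N ≤ m) (j k : Fin m) (hk : (k:ℕ) < N) :
    (crea (low j) (annih (high j) (Pi.single (Tset m N k) (1:ℂ)))) (Sset m N) =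
      if j = k then sa m N k * sb m N k else 0 := by
  rw [annih_single]
  by_cases hjk : j = k
  · subst hjk
    rw [if_pos ((mem_T_high hN j j).mpr rfl), if_pos rfl]
    have hTE : (Tset m N j).erase (high j) = Eset m N j :=
      Finset.erase_insert (notMem_E_high hN j j)
    have hfT : (Tset m N j).filter (fun x => x < high j) = (Eset m N j).filter (fun x => x < high j) := by
      rw [Tset, Finset.filter_insert, if_neg (lt_irrefl _)]
    rw [map_smul, hTE, crea_single, if_neg (show low j ∉ Eset m N j from Finset.notMem_erase _ _)]
    have hins : insert (low j) (Eset m N j) = Sset m N :=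
      Finset.insert_erase ((mem_S_low j).mpr hk)
    have hfE : (Eset m N j).filter (fun x => x < low j) = (Sset m N).filter (fun x => x < low j) := by
      rw [Eset, Finset.filter_erase, Finset.erase_eq_of_notMem]
      simp
    rw [hins]
    simp only [Pi.smul_apply, smul_eq_mul, Pi.single_eq_same, mul_one]
    rw [hfT, show ((Eset m N j).filter (fun x => x < low j)).card = ((Sset m N).filter (fun x => x < low j)).card from congrArg _ hfE]
    rw [sa, sb]
    ring
  · rw [if_neg (fun h => hjk ((mem_T_high hN j k).mp h)), map_zero, if_neg hjk]
    rfl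

lemma sab_sq (m N : ℕ) (k : Fin m) : (sa m N k * sb m N k)^2 = 1 := by
  rw [sa, sb, mul_pow, ← pow_mul, ← pow_mul, mul_comm _ 2, mul_comm _ 2,
    pow_mul, pow_mul, neg_one_sq, one_pow, one_pow, mul_one]

section main
variable (m N : ℕ) (ω : Fin m → ℝ)

lemma hJ (v : FockSpace (2*m)) : Jgen m ω v = (1/2:ℂ) • ∑ k : Fin m,
    ((ω k:ℂ)) • (crea (low k) (annih (high k) v) + crea (high k) (annih (low k) v)) := by
  simp [Jgen, LinearMap.sum_apply, LinearMap.smul_apply, LinearMap.add_apply, LinearMap.comp_apply]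

lemma hJpsi (hN : N ≤ m) : Jgen m ω (fockN (2*m) N) = (1/2:ℂ) • ∑ k : Fin m, ((ω k:ℂ)) •
    (if (k:ℕ) < N then (sa m N k * sb m N k) • (Pi.single (Tset m N k) (1:ℂ) : FockSpace (2*m)) else 0) := by
  rw [show fockN (2*m) N = Pi.single (Sset m N) 1 from rfl, hJ]
  congr 1
  exact Finset.sum_congr rfl fun k _ => by rw [stage1 hN k]

lemma hJT (hN : N ≤ m) (k : Fin m) (hk : (k:ℕ) < N) :
    (Jgen m ω (Pi.single (Tset m N k) (1:ℂ))) (Sset m N)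
      = (1/2:ℂ) * ((ω k:ℂ) * (sa m N k * sb m N k)) := by
  rw [hJ]
  simp only [Pi.smul_apply, Finset.sum_apply, Pi.add_apply, smul_eq_mul,
    stage2a hN _ k hk, stage2b hN _ k, add_zero, mul_ite, mul_zero]
  rw [Finset.sum_ite_eq' Finset.univ k]
  simp

theorem main_calc (hN : N ≤ m) :
    4 * (fockInner (fockN (2 * m) N) (Jgen m ω (Jgen m ω (fockN (2 * m) N)))
          - (fockInner (fockN (2 * m) N) (Jgen m ω (fockN (2 * m) N))) ^ 2)
      = ((∑ k : Fin N, ω (Fin.castLE hN k) ^ 2 : ℝ) : ℂ) := by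
  have hI1 : fockInner (fockN (2*m) N) (Jgen m ω (fockN (2*m) N)) = 0 := by
    rw [hJpsi m N ω hN, show fockN (2*m) N = Pi.single (Sset m N) 1 from rfl, fockInner_single]
    simp only [Pi.smul_apply, Finset.sum_apply, smul_eq_mul]
    rw [Finset.sum_congr rfl (fun k _ => ?_), Finset.sum_const_zero, mul_zero]
    by_cases hk : (k:ℕ) < N
    · simp [hk, Pi.single_apply, S_ne_T hN k]
    · simp [hk]
  have hterm : ∀ k : Fin m, (Jgen m ω (((ω k:ℂ)) •
      (if (k:ℕ) < N then (sa m N k * sb m N k) • (Pi.single (Tset m N k) (1:ℂ) : FockSpace (2*m)) else 0))) (Sset m N)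
      = if (k:ℕ) < N then (1/2:ℂ) * (ω k:ℂ)^2 else 0 := by
    intro k
    by_cases hk : (k:ℕ) < N
    · rw [if_pos hk, if_pos hk, map_smul, map_smul, Pi.smul_apply, Pi.smul_apply,
        smul_eq_mul, smul_eq_mul, hJT m N ω hN k hk]
      linear_combination ((1/2:ℂ) * ((ω k : ℝ):ℂ)^2) * sab_sq m N k
    · simp only [if_neg hk, smul_zero, map_zero, Pi.zero_apply]
  have hJJ : fockInner (fockN (2*m) N) (Jgen m ω (Jgen m ω (fockN (2*m) N)))
      = (1/4:ℂ) * ∑ k ∈ Finset.univ.filter (fun k : Fin m => (k:ℕ) < N), ((ω k:ℂ))^2 := by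
    rw [hJpsi m N ω hN, map_smul, map_sum,
      show fockN (2*m) N = Pi.single (Sset m N) 1 from rfl, fockInner_single]
    simp only [Pi.smul_apply, Finset.sum_apply, smul_eq_mul]
    rw [Finset.sum_congr rfl (fun k _ => hterm k), Finset.sum_ite, Finset.sum_const_zero,
      add_zero, ← Finset.mul_sum]
    ring
  rw [hI1, hJJ]
  have himg : (Finset.univ : Finset (Fin N)).image (Fin.castLE hN)
      = Finset.univ.filter (fun k : Fin m => (k:ℕ) < N) := by
    ext x
    simp only [Finset.mem_image, Finset.mem_univ, true_and, Finset.mem_filter]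
    constructor
    · rintro ⟨a, rfl⟩; exact a.isLt
    · intro hx; exact ⟨⟨x.1, hx⟩, rfl⟩
  have hsum : ∑ k ∈ Finset.univ.filter (fun k : Fin m => (k:ℕ) < N), ((ω k:ℂ))^2
      = ((∑ k : Fin N, ω (Fin.castLE hN k) ^ 2 : ℝ) : ℂ) := by
    push_cast
    rw [← himg, Finset.sum_image (fun a _ b _ h => Fin.castLE_injective hN h)]
  rw [hsum]
  ring
end main

/-- paper's equation (42): the quantum Fisher information (four times
the variance) of the generator `J_x^{(1)}` in the separable Fock state with the first
`N` modes occupied equals `∑_{k<N} ω_k²`. -/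
theorem fisher_information_fock_state (m N : ℕ) (hm : 1 ≤ m) (hN : N ≤ m)
    (ω : Fin m → ℝ) :
    4 * (fockInner (fockN (2 * m) N) (Jgen m ω (Jgen m ω (fockN (2 * m) N)))
          - (fockInner (fockN (2 * m) N) (Jgen m ω (fockN (2 * m) N))) ^ 2)
      = ((∑ k : Fin N, ω (Fin.castLE hN k) ^ 2 : ℝ) : ℂ) :=
  main_calc m N ω hN
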